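/- With s(d,m) ∈ ℤ[q] the generating polynomial of basal billiard partitions with d parts and largest part m, for every n ≥ 1 the following identity holds in the polynomial ring ℤ[q,z]: ∑_{d=1}^{2n} s(d, 2n)·z^d = q^{n(n+1)}·z^n·∏_{i=1}^{n−1} (1 + q^{2i+1} z). -/

import Mathlib

/-- An Euclidean billiard partition, recorded as the strictly decreasing list
of its parts: a nonempty strictly decreasing list of positive integers whose
smallest (last) part is even and in which no two adjacent parts are both odd. -/
def IsEBP (l : List ℕ) : Prop :=
  l ≠ [] ∧ l.Chain' (fun a b => b < a) ∧ (∀ x ∈ l, 0 < x) ∧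
    (∀ m ∈ l.getLast?, Even m) ∧ l.Chain' (fun a b => ¬(Odd a ∧ Odd b))

/-- A basal billiard partition: an Euclidean billiard partition whose smallest
part equals `2` and in which adjacent parts differ by at most `2`. -/
def IsBasal (l : List ℕ) : Prop :=
  IsEBP l ∧ l.getLast? = some 2 ∧ l.Chain' (fun a b => a - b ≤ 2)

open Classical Polynomial in
/-- `s d m ∈ ℤ[q]` is the generating polynomial `∑_π q^{|π|}` of basal billiard
partitions `π` with exactly `d` parts and largest part `m` (such a partition has
all parts `≤ m`, hence is encoded as a function `Fin d → Fin (m+1)`, and each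
basal billiard partition with `d` parts and largest part `m` occurs exactly once
in the sum below); in particular `s 0 m = 0`. -/
noncomputable def s (d m : ℕ) : Polynomial ℤ :=
  ∑ f : Fin d → Fin (m + 1),
    if IsBasal (List.ofFn fun i => (f i : ℕ)) ∧
        (List.ofFn fun i => (f i : ℕ)).head? = some m
    then X ^ (List.ofFn fun i => (f i : ℕ)).sum
    else 0

/-!
A basal billiard partition with largest part `2n` contains every even number `2, 4, …, 2n`:
consecutive parts differ by at most `2` and two odd parts are never adjacent. Between `2i + 2`
and `2i` it may or may not contain the odd part `2i + 1`, for `1 ≤ i ≤ n - 1`. So these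
partitions correspond to the subsets `S ⊆ {1, …, n - 1}`; the one for `S` has `n + |S|` parts and
size `n(n + 1) + ∑_{i ∈ S} (2i + 1)`, and expanding the product over `S` gives the identity.
-/

theorem isBasal_singleton {a : ℕ} : IsBasal [a] ↔ a = 2 := by
  refine ⟨fun h => by simpa using h.2.1, ?_⟩
  rintro rfl
  exact ⟨⟨by simp, .singleton _, by simp, by simp, .singleton _⟩, rfl, .singleton _⟩

theorem isBasal_cons_cons {a b : ℕ} {l : List ℕ} :
    IsBasal (a :: b :: l) ↔ (b < a ∧ a - b ≤ 2 ∧ ¬(Odd a ∧ Odd b)) ∧ IsBasal (b :: l) := by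
  simp only [IsBasal, IsEBP, List.getLast?_cons_cons, List.mem_cons, forall_eq_or_imp]
  constructor
  · rintro ⟨⟨-, hdec, ⟨-, hpos⟩, hlast, hpar⟩, h2, hdiff⟩
    obtain ⟨hba, hdec⟩ := List.isChain_cons_cons.mp hdec
    obtain ⟨hpar₁, hpar⟩ := List.isChain_cons_cons.mp hpar
    obtain ⟨hdiff₁, hdiff⟩ := List.isChain_cons_cons.mp hdiff
    exact ⟨⟨hba, hdiff₁, hpar₁⟩, ⟨by simp, hdec, hpos, hlast, hpar⟩, h2, hdiff⟩
  · rintro ⟨⟨hba, hdiff₁, hpar₁⟩, ⟨-, hdec, hpos, hlast, hpar⟩, h2, hdiff⟩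
    exact ⟨⟨by simp, List.isChain_cons_cons.mpr ⟨hba, hdec⟩, ⟨by omega, hpos⟩, hlast,
      List.isChain_cons_cons.mpr ⟨hpar₁, hpar⟩⟩, h2, List.isChain_cons_cons.mpr ⟨hdiff₁, hdiff⟩⟩

theorem le_of_mem_of_isChain_gt {α : Type*} [Preorder α] {l : List α} {m x : α}
    (hl : l.IsChain (fun a b => b < a)) (hm : l.head? = some m) (hx : x ∈ l) : x ≤ m := by
  obtain ⟨t, rfl⟩ : ∃ t, l = m :: t := List.head?_eq_some_iff.mp hm
  rcases List.mem_cons.mp hx with rfl | hx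
  · rfl
  · exact ((List.pairwise_cons.mp hl.pairwise).1 x hx).le

/-- The basal billiard partition with largest part `2k + 2` whose odd parts are the `2i + 1` with
`i ∈ S`, `1 ≤ i ≤ k`. -/
def basalList : ℕ → Finset ℕ → List ℕ
  | 0, _ => [2]
  | k + 1, S => (2 * k + 4) :: if k + 1 ∈ S then (2 * k + 3) :: basalList k S else basalList k S

theorem basalList_head? (k : ℕ) (S : Finset ℕ) : (basalList k S).head? = some (2 * k + 2) := by
  cases k <;> rfl

theorem isBasal_basalList (k : ℕ) (S : Finset ℕ) : IsBasal (basalList k S) := by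
  induction k with
  | zero => exact isBasal_singleton.mpr rfl
  | succ k ih =>
    obtain ⟨t, ht⟩ := List.head?_eq_some_iff.mp (basalList_head? k S)
    rw [ht] at ih
    have not_odd_even (j : ℕ) : ¬Odd (2 * j) := by simp
    rw [basalList, ht]
    split_ifs
    · refine isBasal_cons_cons.mpr ⟨⟨by omega, by omega, ?_⟩, isBasal_cons_cons.mpr
        ⟨⟨by omega, by omega, fun h => not_odd_even (k + 1) h.2⟩, ih⟩⟩
      exact fun h => not_odd_even (k + 2) h.1
    · exact isBasal_cons_cons.mpr ⟨⟨by omega, by omega, fun h => not_odd_even (k + 2) h.1⟩, ih⟩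

theorem two_mul_add_one_mem_basalList_iff {k i : ℕ} {S : Finset ℕ} :
    2 * i + 1 ∈ basalList k S ↔ i ∈ Finset.Icc 1 k ∩ S := by
  induction k with
  | zero => simp [basalList]
  | succ k ih =>
    simp only [basalList, Finset.mem_inter, Finset.mem_Icc] at ih ⊢
    split_ifs <;> simp only [List.mem_cons, ih] <;> grind

theorem basalList_insert_of_lt {k j : ℕ} (S : Finset ℕ) (hkj : k < j) :
    basalList k (insert j S) = basalList k S := by
  induction k with
  | zero => rfl
  | succ k ih =>
    simp only [basalList, Finset.mem_insert, ih (by omega)]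
    grind

theorem sum_Icc_inter_succ {M : Type*} [AddCommMonoid M] (S : Finset ℕ) (k : ℕ) (f : ℕ → M) :
    ∑ i ∈ Finset.Icc 1 (k + 1) ∩ S, f i =
      (if k + 1 ∈ S then f (k + 1) else 0) + ∑ i ∈ Finset.Icc 1 k ∩ S, f i := by
  rw [← Finset.sum_ite_mem, ← Finset.sum_ite_mem, Finset.sum_Icc_succ_top (by omega), add_comm]

theorem basalList_sum (k : ℕ) (S : Finset ℕ) :
    (basalList k S).sum = (k + 1) * (k + 2) + ∑ i ∈ Finset.Icc 1 k ∩ S, (2 * i + 1) := by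
  induction k with
  | zero => rfl
  | succ k ih =>
    rw [basalList, sum_Icc_inter_succ]
    split_ifs <;> simp only [List.sum_cons, ih] <;> ring

theorem basalList_length (k : ℕ) (S : Finset ℕ) :
    (basalList k S).length = k + 1 + (Finset.Icc 1 k ∩ S).card := by
  induction k with
  | zero => rfl
  | succ k ih =>
    rw [basalList, Finset.card_eq_sum_ones, sum_Icc_inter_succ, ← Finset.card_eq_sum_ones]
    split_ifs <;> simp only [List.length_cons, ih] <;> ring

theorem exists_eq_basalList {k : ℕ} {l : List ℕ} (hl : IsBasal l)
    (hhead : l.head? = some (2 * k + 2)) : ∃ S ⊆ Finset.Icc 1 k, l = basalList k S := by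
  induction k generalizing l with
  | zero =>
    obtain ⟨t, rfl⟩ := List.head?_eq_some_iff.mp hhead
    refine ⟨∅, by simp, ?_⟩
    obtain _ | ⟨b, u⟩ := t
    · rfl
    obtain ⟨⟨hb, -⟩, hbu⟩ := isBasal_cons_cons.mp hl
    -- the last part `2` lies in the tail, whose parts are at most `b < 2`
    have := le_of_mem_of_isChain_gt hbu.1.2.1 rfl (List.mem_of_getLast? hbu.2.1)
    omega
  | succ k ih =>
    obtain ⟨t, rfl⟩ := List.head?_eq_some_iff.mp hhead
    obtain _ | ⟨b, u⟩ := t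
    · simp [isBasal_singleton] at hl
    obtain ⟨⟨hb, hdiff, -⟩, hbu⟩ := isBasal_cons_cons.mp hl
    have hIcc : Finset.Icc 1 k ⊆ Finset.Icc 1 (k + 1) := Finset.Icc_subset_Icc_right (by omega)
    obtain rfl | rfl : b = 2 * k + 2 ∨ b = 2 * k + 3 := by omega
    · obtain ⟨S, hS, hu⟩ := ih hbu rfl
      have hkS : k + 1 ∉ S := fun h => by simpa using hS h
      exact ⟨S, hS.trans hIcc, by rw [basalList, if_neg hkS, ← hu]; rfl⟩
    · obtain _ | ⟨c, v⟩ := u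
      · simp [isBasal_singleton] at hbu
      obtain ⟨⟨hc, hdiff', hodd⟩, hcv⟩ := isBasal_cons_cons.mp hbu
      obtain rfl : c = 2 * k + 2 := by
        by_contra hne
        exact hodd ⟨⟨k + 1, by ring⟩, ⟨k, by omega⟩⟩
      obtain ⟨S, hS, hv⟩ := ih hcv rfl
      refine ⟨insert (k + 1) S, Finset.insert_subset (by simp) (hS.trans hIcc), ?_⟩
      rw [basalList, if_pos (Finset.mem_insert_self _ _), basalList_insert_of_lt _ k.lt_succ_self,
        ← hv]
      rfl

open Polynomial

theorem s_eq_sum_filter_length {m : ℕ} {L : Finset (List ℕ)}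
    (hL : ∀ l, l ∈ L ↔ IsBasal l ∧ l.head? = some m) (d : ℕ) :
    s d m = ∑ l ∈ L with l.length = d, (X : ℤ[X]) ^ l.sum := by
  classical
  have ofFn_getD {l : List ℕ} (hl : l ∈ L) (hd : l.length = d) :
      List.ofFn (fun i : Fin d => (Fin.ofNat (m + 1) (l.getD i 0) : ℕ)) = l := by
    refine List.ext_getElem (by simp [hd]) fun i _ hi => ?_
    have hle := le_of_mem_of_isChain_gt ((hL l).1 hl).1.1.2.1 ((hL l).1 hl).2 (List.getElem_mem hi)
    rw [List.getElem_ofFn, Fin.val_ofNat, List.getD_eq_getElem _ _ hi, Nat.mod_eq_of_lt (by omega)]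
  rw [s, ← Finset.sum_filter]
  refine Finset.sum_nbij' (fun f => List.ofFn fun i => (f i : ℕ))
    (fun l i => Fin.ofNat (m + 1) (l.getD i 0)) ?_ ?_ ?_ ?_ fun _ _ => rfl
  · intro f hf
    simpa [hL] using hf
  · intro l hl
    rw [Finset.mem_filter] at hl
    rw [Finset.mem_filter, ofFn_getD hl.1 hl.2, ← hL]
    exact ⟨Finset.mem_univ _, hl.1⟩
  · intro f _
    funext i
    simp
  · intro l hl
    rw [Finset.mem_filter] at hl
    exact ofFn_getD hl.1 hl.2

def basalLists (k : ℕ) : Finset (List ℕ) :=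
  (Finset.Icc 1 k).powerset.image (basalList k)

theorem mem_basalLists {k : ℕ} {l : List ℕ} :
    l ∈ basalLists k ↔ IsBasal l ∧ l.head? = some (2 * k + 2) := by
  simp only [basalLists, Finset.mem_image, Finset.mem_powerset]
  constructor
  · rintro ⟨S, -, rfl⟩
    exact ⟨isBasal_basalList k S, basalList_head? k S⟩
  · rintro ⟨hl, hhead⟩
    obtain ⟨S, hS, rfl⟩ := exists_eq_basalList hl hhead
    exact ⟨S, hS, rfl⟩

theorem basalList_injOn (k : ℕ) :
    Set.InjOn (basalList k) ((Finset.Icc 1 k).powerset : Set (Finset ℕ)) := by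
  intro S hS T hT hST
  rw [Finset.coe_powerset, Set.mem_preimage, Set.mem_powerset_iff, Finset.coe_subset] at hS hT
  ext i
  have := congrArg (2 * i + 1 ∈ ·) hST
  simpa only [two_mul_add_one_mem_basalList_iff, Finset.inter_eq_right.mpr hS,
    Finset.inter_eq_right.mpr hT, eq_iff_iff] using this

theorem length_mem_Icc_of_mem_basalLists {k : ℕ} {l : List ℕ} (hl : l ∈ basalLists k) :
    l.length ∈ Finset.Icc 1 (2 * k + 2) := by
  obtain ⟨S, -, rfl⟩ := Finset.mem_image.mp hl
  have := (Finset.Icc 1 k ∩ S).card_le_card Finset.inter_subset_left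
  rw [Nat.card_Icc] at this
  rw [basalList_length, Finset.mem_Icc]
  omega

theorem basalList_weight {k : ℕ} {S : Finset ℕ} (hS : S ⊆ Finset.Icc 1 k) :
    C ((X : ℤ[X]) ^ (basalList k S).sum) * (X : ℤ[X][X]) ^ (basalList k S).length =
      C (X ^ ((k + 1) * (k + 2))) * X ^ (k + 1) * ∏ i ∈ S, C ((X : ℤ[X]) ^ (2 * i + 1)) * X := by
  rw [basalList_sum, basalList_length, Finset.inter_eq_right.mpr hS, Finset.prod_mul_distrib,
    Finset.prod_const, ← map_prod, Finset.prod_pow_eq_pow_sum, pow_add, pow_add, map_mul]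
  ring

open Polynomial in
/-- For every `n ≥ 1`, in `ℤ[q][z]` (with `z` the outer variable and `q` the
inner one): `∑_{d=1}^{2n} s(d, 2n)·z^d = q^{n(n+1)}·z^n·∏_{i=1}^{n−1}(1 + q^{2i+1} z)`. -/
theorem s_even_generating_product (n : ℕ) (hn : 1 ≤ n) :
    ∑ d ∈ Finset.Icc 1 (2 * n), (C (s d (2 * n)) * X ^ d : Polynomial (Polynomial ℤ)) =
      C ((X : Polynomial ℤ) ^ (n * (n + 1))) * X ^ n *
        ∏ i ∈ Finset.Icc 1 (n - 1), (1 + C ((X : Polynomial ℤ) ^ (2 * i + 1)) * X) := by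
  obtain ⟨k, rfl⟩ : ∃ k, n = k + 1 := ⟨n - 1, by omega⟩
  rw [show 2 * (k + 1) = 2 * k + 2 by ring, Nat.add_sub_cancel]
  calc ∑ d ∈ Finset.Icc 1 (2 * k + 2), C (s d (2 * k + 2)) * X ^ d
      = ∑ d ∈ Finset.Icc 1 (2 * k + 2), ∑ l ∈ basalLists k with l.length = d,
          C ((X : ℤ[X]) ^ l.sum) * X ^ l.length := by
        refine Finset.sum_congr rfl fun d _ => ?_
        rw [s_eq_sum_filter_length (fun _ => mem_basalLists), map_sum, Finset.sum_mul]
        exact Finset.sum_congr rfl fun l hl => by rw [(Finset.mem_filter.mp hl).2]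
    _ = ∑ l ∈ basalLists k, C ((X : ℤ[X]) ^ l.sum) * X ^ l.length :=
        Finset.sum_fiberwise_of_maps_to (fun _ => length_mem_Icc_of_mem_basalLists) _
    _ = ∑ S ∈ (Finset.Icc 1 k).powerset,
          C (X ^ ((k + 1) * (k + 2))) * X ^ (k + 1) * ∏ i ∈ S, C ((X : ℤ[X]) ^ (2 * i + 1)) * X := by
        rw [basalLists, Finset.sum_image (basalList_injOn k)]
        exact Finset.sum_congr rfl fun S hS => basalList_weight (Finset.mem_powerset.mp hS)
    _ = _ := by rw [← Finset.mul_sum, ← Finset.prod_one_add]
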